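/- arXiv:1811.09429 — 2 statements merged into one kernel-verified Lean document; each statement's English description precedes it below -/
import Mathlib

section
/- Let G be a finite simple graph, k ≥ 1 a natural number, and let u and v be adjacent vertices of G such that N(v) ⊆ N[u], where N(v) is the open neighborhood of v and N[u] = N(u) ∪ {u} is the closed neighborhood of u. Then G has a vertex cover of size at most k if and only if G − u has a vertex cover of size at most k − 1. -/
/-- `X` is a vertex cover of `G`: every edge has at least one endpoint in `X`. -/
def IsVC {V : Type*} (G : SimpleGraph V) (X : Set V) : Prop :=
  ∀ ⦃u w : V⦄, G.Adj u w → u ∈ X ∨ w ∈ X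

/-- `G` has a vertex cover of size at most `k`. -/
def HasVC {V : Type*} (G : SimpleGraph V) (k : ℕ) : Prop :=
  ∃ X : Set V, IsVC G X ∧ X.ncard ≤ k

/-!
A vertex cover `X` missing `u` contains `N(u)`, hence `v` and, since `N(v) ⊆ N[u]`, every
neighbour of `v` other than `u`. Exchanging `v` for `u` therefore gives a cover of the same size
containing `u`, and deleting `u` from it covers `G - u`. Conversely, adding `u` to a cover of
`G - u` covers `G`.
-/

namespace IsVC

variable {V : Type*} {G : SimpleGraph V}

theorem preimage_val {X : Set V} (hX : IsVC G X) (s : Set V) :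
    IsVC (G.induce s) (Subtype.val ⁻¹' X) :=
  fun _ _ hab ↦ hX hab

theorem image_val_union_compl {s : Set V} {Y : Set s} (hY : IsVC (G.induce s) Y) :
    IsVC G (Subtype.val '' Y ∪ sᶜ) := by
  intro a b hab
  by_cases ha : a ∈ s
  · by_cases hb : b ∈ s
    · rcases hY (show (G.induce s).Adj ⟨a, ha⟩ ⟨b, hb⟩ from hab) with h | h
      · exact .inl (.inl ⟨_, h, rfl⟩)
      · exact .inr (.inl ⟨_, h, rfl⟩)
    · exact .inr (.inr hb)
  · exact .inl (.inr ha)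

theorem exchange {X : Set V} (hX : IsVC G X) {u v : V} (hu : u ∉ X)
    (hN : G.neighborSet v ⊆ insert u (G.neighborSet u)) :
    IsVC G (insert u (X \ {v})) := by
  have cover_of_mem {a b : V} (hab : G.Adj a b) (ha : a ∈ X) :
      a ∈ insert u (X \ {v}) ∨ b ∈ insert u (X \ {v}) := by
    by_cases hav : a = v
    · subst hav
      rcases hN hab with rfl | hub
      · exact .inr (.inl rfl)
      · exact .inr (.inr ⟨(hX hub).resolve_left hu, hab.ne'⟩)
    · exact .inl (.inr ⟨ha, hav⟩)
  intro a b hab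
  rcases hX hab with ha | hb
  · exact cover_of_mem hab ha
  · exact (cover_of_mem hab.symm hb).symm

theorem hasVC_induce_ne {X : Set V} (hX : IsVC G X) {u : V} (hu : u ∈ X) :
    HasVC (G.induce {w | w ≠ u}) (X.ncard - 1) := by
  refine ⟨Subtype.val ⁻¹' X, hX.preimage_val _, le_of_eq ?_⟩
  have hrestrict : (Subtype.val ⁻¹' X : Set {w | w ≠ u}) = Subtype.val ⁻¹' (X \ {u}) := by
    ext ⟨w, hw⟩
    simpa using fun _ ↦ hw
  rw [hrestrict, Set.ncard_preimage_of_injective_subset_range Subtype.val_injective,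
    Set.ncard_sdiff_singleton_of_mem hu]
  exact fun w hw ↦ ⟨⟨w, hw.2⟩, rfl⟩

end IsVC

namespace HasVC

variable {V : Type*} {G : SimpleGraph V}

theorem mono {m n : ℕ} (h : HasVC G m) (hmn : m ≤ n) : HasVC G n :=
  let ⟨X, hX, hXm⟩ := h
  ⟨X, hX, hXm.trans hmn⟩

theorem exists_isVC_mem {k : ℕ} (h : HasVC G k) {u v : V} (huv : G.Adj u v)
    (hN : G.neighborSet v ⊆ insert u (G.neighborSet u)) :
    ∃ X, IsVC G X ∧ u ∈ X ∧ X.ncard ≤ k := by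
  obtain ⟨X, hX, hXk⟩ := h
  by_cases hu : u ∈ X
  · exact ⟨X, hX, hu, hXk⟩
  have hv : v ∈ X := (hX huv).resolve_left hu
  refine ⟨insert u (X \ {v}), hX.exchange hu hN, Set.mem_insert u _, ?_⟩
  rwa [Set.ncard_exchange hu hv]

theorem of_induce_ne {u : V} {m : ℕ} (h : HasVC (G.induce {w | w ≠ u}) m) :
    HasVC G (m + 1) := by
  obtain ⟨Y, hY, hYm⟩ := h
  refine ⟨_, hY.image_val_union_compl, ?_⟩
  calc (Subtype.val '' Y ∪ {w | w ≠ u}ᶜ).ncard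
      ≤ (Subtype.val '' Y).ncard + ({w | w ≠ u}ᶜ : Set V).ncard := Set.ncard_union_le _ _
    _ ≤ m + 1 := by
      rw [Set.ncard_image_of_injective _ Subtype.val_injective]
      simp [Set.compl_ofPred, hYm]

end HasVC

theorem stmt_9_general {V : Type*} (G : SimpleGraph V) (k : ℕ) (hk : 1 ≤ k)
    (u v : V) (huv : G.Adj u v)
    (hN : G.neighborSet v ⊆ insert u (G.neighborSet u)) :
    HasVC G k ↔ HasVC (G.induce {w : V | w ≠ u}) (k - 1) := by
  constructor
  · intro h
    obtain ⟨X, hX, hu, hXk⟩ := h.exists_isVC_mem huv hN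
    exact (hX.hasVC_induce_ne hu).mono (Nat.sub_le_sub_right hXk 1)
  · intro h
    exact Nat.sub_add_cancel hk ▸ h.of_induce_ne

theorem stmt_9 {V : Type*} [Fintype V] (G : SimpleGraph V) (k : ℕ) (hk : 1 ≤ k)
    (u v : V) (huv : G.Adj u v)
    (hN : G.neighborSet v ⊆ insert u (G.neighborSet u)) :
    HasVC G k ↔ HasVC (G.induce {w : V | w ≠ u}) (k - 1) :=
  stmt_9_general G k hk u v huv hN
end

section
/- Let G be a finite simple graph, k a natural number, and v a vertex of G of degree exactly 3 whose neighborhood N(v) = {a, b, c} is an independent set in G. Let G' be the graph with vertex set V(G) \ {v} whose edge set consists of all edges of G between vertices of V(G) \ {v}, together with the edges {a, b} and {b, c}, all edges {a, x} for x ∈ N_G(b) \ {v, a}, all edges {b, y} for y ∈ N_G(c) \ {v, b}, and all edges {c, z} for z ∈ N_G(a) \ {v, c}. Then G has a vertex cover of size at most k if and only if G' has a vertex cover of size at most k. -/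
/-- The graph `G'` on `V(G) \ {v}` whose edges are those of `G` between vertices of
`V(G) \ {v}`, together with `{a, b}`, `{b, c}`, all `{a, x}` for `x ∈ N_G(b) \ {v, a}`,
all `{b, y}` for `y ∈ N_G(c) \ {v, b}`, and all `{c, z}` for `z ∈ N_G(a) \ {v, c}`. -/
def ReduceDegThree {V : Type*} (G : SimpleGraph V) (v a b c : V) :
    SimpleGraph {w : V // w ≠ v} :=
  SimpleGraph.fromRel (fun w w' =>
    G.Adj w.1 w'.1 ∨
    (w.1 = a ∧ w'.1 = b) ∨ (w.1 = b ∧ w'.1 = c) ∨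
    (w.1 = a ∧ G.Adj b w'.1) ∨ (w.1 = b ∧ G.Adj c w'.1) ∨ (w.1 = c ∧ G.Adj a w'.1))

/-! A vertex cover `X` of `G` contains `v` or all of `N(v) = {a, b, c}`. Replacing `v` by one
well-chosen vertex of `{a, b, c}` covers the new edges of `G'`, since an edge `{a, x}` with
`x ∈ N(b)` is covered by `a`, or by `x` as soon as `b ∉ X`, and cyclically.
Conversely, a cover `Y` of `G'` covers `G - v`, and either contains `a, b, c` (then it covers
`G`) or, through the new edges, contains some `t ∈ {a, b, c}` with `N(t) \ {v} ⊆ Y`; then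
`(Y \ {t}) ∪ {v}` covers `G`. -/

namespace IsVC

variable {V : Type*} {G : SimpleGraph V} {X Y : Set V} {u : V}

theorem mono (hX : IsVC G X) (hXY : X ⊆ Y) : IsVC G Y :=
  fun _ _ h => (hX h).imp (@hXY _) (@hXY _)

theorem neighborSet_subset (hX : IsVC G X) (hu : u ∉ X) : G.neighborSet u ⊆ X :=
  fun _ h => (hX h).resolve_left hu

theorem diff_singleton (hX : IsVC G X) (hu : G.neighborSet u ⊆ X) : IsVC G (X \ {u}) := by
  intro x y h
  by_cases hx : x = u
  · subst hx
    exact Or.inr ⟨hu h, h.ne'⟩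
  by_cases hy : y = u
  · subst hy
    exact Or.inl ⟨hu h.symm, h.ne⟩
  exact (hX h).imp (fun h' => ⟨h', hx⟩) (fun h' => ⟨h', hy⟩)

end IsVC

section ReduceDegThree

variable {V : Type*} {G : SimpleGraph V} {v a b c : V} {T X : Set V}

variable (G v a b c) in
/-- The condition on `T : Set V` for `Subtype.val ⁻¹' T` to cover `ReduceDegThree G v a b c`,
phrased in `G` (see `isVC_reduceDegThree_preimage_iff`). -/
def ReduceDegThreeCover (T : Set V) : Prop :=
  IsVC G (insert v T) ∧ (a ∈ T ∨ b ∈ T) ∧ (b ∈ T ∨ c ∈ T) ∧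
    (a ∈ T ∨ G.neighborSet b ⊆ insert v T) ∧ (b ∈ T ∨ G.neighborSet c ⊆ insert v T) ∧
    (c ∈ T ∨ G.neighborSet a ⊆ insert v T)

theorem isVC_reduceDegThree_preimage_iff (hav : a ≠ v) (hbv : b ≠ v) (hcv : c ≠ v)
    (hab : a ≠ b) (hbc : b ≠ c) (hnab : ¬ G.Adj a b) (hnac : ¬ G.Adj a c)
    (hnbc : ¬ G.Adj b c) :
    IsVC (ReduceDegThree G v a b c) (Subtype.val ⁻¹' T) ↔ ReduceDegThreeCover G v a b c T := by
  constructor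
  · intro hY
    have cover : ∀ x y, x ≠ v → y ≠ v → x ≠ y →
        (G.Adj x y ∨ (x = a ∧ y = b) ∨ (x = b ∧ y = c) ∨ (x = a ∧ G.Adj b y) ∨
          (x = b ∧ G.Adj c y) ∨ (x = c ∧ G.Adj a y)) → x ∈ T ∨ y ∈ T :=
      fun x y hx hy hxy h => @hY ⟨x, hx⟩ ⟨y, hy⟩
        ((SimpleGraph.fromRel_adj _ _ _).2 ⟨fun h' => hxy (congrArg Subtype.val h'), .inl h⟩)
    refine ⟨fun x y h => ?_, cover a b hav hbv hab (by simp), cover b c hbv hcv hbc (by simp),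
      ?_, ?_, ?_⟩
    · by_cases hx : x = v
      · exact .inl (.inl hx)
      by_cases hy : y = v
      · exact .inr (.inl hy)
      exact (cover x y hx hy h.ne (.inl h)).imp .inr .inr
    all_goals
      refine or_iff_not_imp_left.2 fun hT z hz => ?_
      rw [SimpleGraph.mem_neighborSet] at hz
      by_cases hzv : z = v
      · exact .inl hzv
      refine .inr ((cover _ z ?_ hzv ?_ (by simp [hz])).resolve_left hT)
      · assumption
      · rintro rfl
        simp_all [G.adj_comm]
  · rintro ⟨hvc, hab', hbc', ha, hb, hc⟩
    have mem : ∀ {z}, z ≠ v → z ∈ insert v T → z ∈ T := fun hz h => h.resolve_left hz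
    have key : ∀ x y, x ≠ v → y ≠ v →
        (G.Adj x y ∨ (x = a ∧ y = b) ∨ (x = b ∧ y = c) ∨ (x = a ∧ G.Adj b y) ∨
          (x = b ∧ G.Adj c y) ∨ (x = c ∧ G.Adj a y)) → x ∈ T ∨ y ∈ T := by
      rintro x y hx hy (h | ⟨rfl, rfl⟩ | ⟨rfl, rfl⟩ | ⟨rfl, h⟩ | ⟨rfl, h⟩ | ⟨rfl, h⟩)
      · exact (hvc h).imp (mem hx) (mem hy)
      · exact hab'
      · exact hbc'
      · exact ha.imp_right fun hN => mem hy (hN h)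
      · exact hb.imp_right fun hN => mem hy (hN h)
      · exact hc.imp_right fun hN => mem hy (hN h)
    rintro ⟨x, hx⟩ ⟨y, hy⟩ hxy
    obtain ⟨-, h | h⟩ := (SimpleGraph.fromRel_adj _ _ _).1 hxy
    · exact key x y hx hy h
    · exact (key y x hy hx h).symm

theorem reduceDegThreeCover_of_isVC (hX : IsVC G X) (hXT : X ⊆ insert v T)
    (hab : a ∈ T ∨ b ∈ T) (hbc : b ∈ T ∨ c ∈ T) (ha : a ∈ T ∨ b ∉ X) (hb : b ∈ T ∨ c ∉ X)
    (hc : c ∈ T ∨ a ∉ X) : ReduceDegThreeCover G v a b c T :=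
  ⟨hX.mono hXT, hab, hbc, ha.imp_right fun h => (hX.neighborSet_subset h).trans hXT,
    hb.imp_right fun h => (hX.neighborSet_subset h).trans hXT,
    hc.imp_right fun h => (hX.neighborSet_subset h).trans hXT⟩

theorem exists_reduceDegThreeCover_of_isVC [Finite V] (hva : G.Adj v a) (hvb : G.Adj v b)
    (hvc : G.Adj v c) (hX : IsVC G X) :
    ∃ T, ReduceDegThreeCover G v a b c T ∧ T.ncard ≤ X.ncard := by
  by_cases hv : v ∈ X
  · obtain ⟨w, h⟩ : ∃ w, let T := insert w (X \ {v});
        (a ∈ T ∨ b ∈ T) ∧ (b ∈ T ∨ c ∈ T) ∧ (a ∈ T ∨ b ∉ X) ∧ (b ∈ T ∨ c ∉ X) ∧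
          (c ∈ T ∨ a ∉ X) := by
      -- `w` is chosen so that, for `x ∈ {a, b, c} ∩ X`, the image of `x` under
      -- `b ↦ a ↦ c ↦ b` lies in `T`.
      have := hva.ne'; have := hvb.ne'; have := hvc.ne'
      by_cases ha : a ∈ X <;> by_cases hb : b ∈ X <;> by_cases hc : c ∈ X
      exacts [⟨a, by simp [*]⟩, ⟨c, by simp [*]⟩, ⟨b, by simp [*]⟩, ⟨c, by simp [*]⟩,
        ⟨a, by simp [*]⟩, ⟨a, by simp [*]⟩, ⟨b, by simp [*]⟩, ⟨b, by simp [*]⟩]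
    refine ⟨_, reduceDegThreeCover_of_isVC hX ?_ h.1 h.2.1 h.2.2.1 h.2.2.2.1 h.2.2.2.2, ?_⟩
    · intro x hx
      by_cases hxv : x = v
      · exact .inl hxv
      · exact .inr (.inr ⟨hx, hxv⟩)
    · have := Set.ncard_sdiff_singleton_add_one hv (Set.toFinite X)
      have := Set.ncard_insert_le w (X \ {v})
      omega
  · have hN := hX.neighborSet_subset hv
    exact ⟨X, reduceDegThreeCover_of_isVC hX (Set.subset_insert v X) (.inl (hN hva))
      (.inl (hN hvb)) (.inl (hN hva)) (.inl (hN hvb)) (.inl (hN hvc)), le_rfl⟩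

theorem exists_isVC_of_reduceDegThreeCover [Finite V] (hN : G.neighborSet v ⊆ {a, b, c})
    (hT : ReduceDegThreeCover G v a b c T) : ∃ X, IsVC G X ∧ X.ncard ≤ T.ncard := by
  obtain ⟨hvc, hab, hbc, ha, hb, hc⟩ := hT
  obtain ⟨t, ht, htN⟩ : ∃ t ∈ insert v T, G.neighborSet t ⊆ insert v T := by
    by_cases hall : a ∈ T ∧ b ∈ T ∧ c ∈ T
    · refine ⟨v, Set.mem_insert v T, hN.trans ?_⟩
      simp [Set.insert_subset_iff, hall]
    · by_cases haT : a ∈ T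
      · by_cases hbT : b ∈ T
        · exact ⟨a, .inr haT, hc.resolve_left fun hcT => hall ⟨haT, hbT, hcT⟩⟩
        · exact ⟨c, .inr (hbc.resolve_left hbT), hb.resolve_left hbT⟩
      · exact ⟨b, .inr (hab.resolve_left haT), ha.resolve_left haT⟩
  refine ⟨insert v T \ {t}, hvc.diff_singleton htN, ?_⟩
  have := Set.ncard_sdiff_singleton_add_one ht (Set.toFinite _)
  have := Set.ncard_insert_le v T
  omega

end ReduceDegThree

theorem stmt_15_general {V : Type*} [Fintype V] (G : SimpleGraph V) (k : ℕ)
    (v a b c : V)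
    (hab : a ≠ b) (hbc : b ≠ c)
    (hN : G.neighborSet v = {a, b, c})
    (hnab : ¬ G.Adj a b) (hnac : ¬ G.Adj a c) (hnbc : ¬ G.Adj b c) :
    HasVC G k ↔ HasVC (ReduceDegThree G v a b c) k := by
  have hva : G.Adj v a := by simp [← SimpleGraph.mem_neighborSet, hN]
  have hvb : G.Adj v b := by simp [← SimpleGraph.mem_neighborSet, hN]
  have hvc : G.Adj v c := by simp [← SimpleGraph.mem_neighborSet, hN]
  have hcover := fun T : Set V => isVC_reduceDegThree_preimage_iff (T := T) hva.ne' hvb.ne'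
    hvc.ne' hab hbc hnab hnac hnbc
  constructor
  · rintro ⟨X, hX, hXk⟩
    obtain ⟨T, hT, hTX⟩ := exists_reduceDegThreeCover_of_isVC hva hvb hvc hX
    refine ⟨_, (hcover T).2 hT, le_trans ?_ (hTX.trans hXk)⟩
    exact Set.ncard_le_ncard_of_injOn Subtype.val (fun _ h => h) Subtype.val_injective.injOn
  · rintro ⟨Y, hY, hYk⟩
    rw [← Set.preimage_image_eq Y Subtype.val_injective, hcover] at hY
    obtain ⟨X, hX, hXY⟩ := exists_isVC_of_reduceDegThreeCover hN.subset hY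
    exact ⟨X, hX, hXY.trans ((Set.ncard_image_of_injective Y Subtype.val_injective).trans_le hYk)⟩

theorem stmt_15 {V : Type*} [Fintype V] (G : SimpleGraph V) (k : ℕ)
    (v a b c : V)
    (hab : a ≠ b) (hac : a ≠ c) (hbc : b ≠ c)
    (hN : G.neighborSet v = {a, b, c})
    (hnab : ¬ G.Adj a b) (hnac : ¬ G.Adj a c) (hnbc : ¬ G.Adj b c) :
    HasVC G k ↔ HasVC (ReduceDegThree G v a b c) k :=
  stmt_15_general G k v a b c hab hbc hN hnab hnac hnbc
end
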